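/- Let A be an n×N matrix over F_q, K an N×N matrix over F_q with K nilpotent, and B an N×n matrix over F_q. If the matrix A(I - K)^{-1}B is invertible over F_q, then the matrix A(I - zK)^{-1}B, regarded as a matrix over F_q(z), is invertible over F_q(z). -/

import Mathlib

/-!
Put `K_z := X • K` over `F[X]`. It is nilpotent, so `1 - K_z` is invertible over `F[X]` itself
and `M(z) := A (1 - K_z)⁻¹ B` is a polynomial matrix. Formation of the transfer matrix commutes
with ring homomorphisms, so `M(z)` specialises to `A (1 - K)⁻¹ B` at `z = 1` and maps to the
unit-delay transfer matrix in `F(z)`. The determinant of `M(z)` evaluates at `1` to a unit,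
hence is a nonzero polynomial and stays nonzero in `F(z)`.
-/

set_option synthInstance.maxHeartbeats 400000
open Matrix Polynomial

section

variable {R S : Type*} [CommRing R] [CommRing S] {l m : Type*} [Fintype m] [DecidableEq m]

theorem Matrix.map_nonsing_inv_of_isUnit (f : R →+* S) {U : Matrix m m R} (hU : IsUnit U) :
    U⁻¹.map f = (U.map f)⁻¹ := by
  refine (inv_eq_left_inv ?_).symm
  rw [← Matrix.map_mul, nonsing_inv_mul U ((isUnit_iff_isUnit_det U).mp hU),
    Matrix.map_one f f.map_zero f.map_one]

noncomputable def transferMatrix (A : Matrix l m R) (K : Matrix m m R) (B : Matrix m l R) :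
    Matrix l l R :=
  A * (1 - K)⁻¹ * B

theorem transferMatrix_map (f : R →+* S) (A : Matrix l m R) {K : Matrix m m R}
    (B : Matrix m l R) (hK : IsUnit (1 - K)) :
    (transferMatrix A K B).map f = transferMatrix (A.map f) (K.map f) (B.map f) := by
  rw [transferMatrix, transferMatrix, Matrix.map_mul, Matrix.map_mul,
    map_nonsing_inv_of_isUnit f hK, Matrix.map_sub _ f.map_sub,
    Matrix.map_one f f.map_zero f.map_one]

theorem Matrix.isUnit_map_of_isUnit_map [Fintype l] [DecidableEq l] [Nontrivial S]
    {L : Type*} [Field L] (f : R →+* S) {g : R →+* L} (hg : Function.Injective g)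
    {M : Matrix l l R} (hM : IsUnit (M.map f)) : IsUnit (M.map g) := by
  rw [isUnit_iff_isUnit_det, ← RingHom.mapMatrix_apply, ← RingHom.map_det] at hM ⊢
  have hdet : M.det ≠ 0 := by
    rintro h0
    rw [h0, map_zero] at hM
    exact not_isUnit_zero hM
  exact isUnit_iff_ne_zero.mpr ((map_ne_zero_iff g hg).mpr hdet)

end

theorem transfer_matrix_unit_delay_isUnit
    {F : Type*} [Field F] {n N : ℕ}
    (A : Matrix (Fin n) (Fin N) F) (K : Matrix (Fin N) (Fin N) F)
    (B : Matrix (Fin N) (Fin n) F)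
    (hK : IsNilpotent K)
    (h : IsUnit (A * (1 - K)⁻¹ * B)) :
    IsUnit
      ((A.map (algebraMap F (RatFunc F))) *
        (1 - (algebraMap F[X] (RatFunc F) X) • K.map (algebraMap F (RatFunc F)))⁻¹ *
        (B.map (algebraMap F (RatFunc F)))) := by
  set Kz : Matrix (Fin N) (Fin N) F[X] := (X : F[X]) • K.map C
  have hKz : IsUnit (1 - Kz) := ((hK.map C.mapMatrix).smul X).isUnit_one_sub
  set Mz := transferMatrix (A.map C) Kz (B.map C)
  have hMz_one : Mz.map (evalRingHom 1) = transferMatrix A K B := by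
    rw [transferMatrix_map _ _ _ hKz]
    congr 1 <;> ext <;> simp [Kz]
  have hMz_ratFunc : Mz.map (algebraMap F[X] (RatFunc F)) =
      transferMatrix (A.map (algebraMap F (RatFunc F)))
        (algebraMap F[X] (RatFunc F) X • K.map (algebraMap F (RatFunc F)))
        (B.map (algebraMap F (RatFunc F))) := by
    rw [transferMatrix_map _ _ _ hKz]
    congr 1
    ext
    simp [Kz, mul_comm _ RatFunc.X]
  rw [← transferMatrix, ← hMz_ratFunc]
  refine isUnit_map_of_isUnit_map (evalRingHom 1) (RatFunc.algebraMap_injective F) ?_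
  rwa [hMz_one]
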